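/- Let Λ₂ = ℤ[t₁^{±1}, t₂^{±1}] and let M be the Λ₂-module presented by generators a₂, a₃, a₅ and relations (1−t₂)(a₅ − a₂) = 0, (1−t₁+t₁t₂)a₂ − (1−t₁)²a₃ − t₂a₅ = 0, and −a₂ + (1−t₁)²a₃ + (t₁+t₂−t₁t₂)a₅ = 0. Let M' be the Λ₂-module presented by generators u, v and the single relation (1−t₂)·((1−t₁)(1−t₂)u − (1−t₁)²v) = 0. Then there is a Λ₂-module isomorphism M ≅ M' sending a₂ ↦ u and a₃ ↦ v. -/

import Mathlib

/-- The Laurent polynomial ring `ℤ[t₁^{±1}, t₂^{±1}]`. -/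
noncomputable abbrev Lambda2 : Type := AddMonoidAlgebra ℤ (Fin 2 →₀ ℤ)

noncomputable def T₁ : Lambda2 := AddMonoidAlgebra.single (Finsupp.single 0 1) 1
noncomputable def T₂ : Lambda2 := AddMonoidAlgebra.single (Finsupp.single 1 1) 1

/-- Free module on generators `a₂, a₃, a₅` (indices 0, 1, 2). -/
noncomputable abbrev F3 : Type := Fin 3 →₀ Lambda2

noncomputable def a₂ : F3 := Finsupp.single 0 1
noncomputable def a₃ : F3 := Finsupp.single 1 1
noncomputable def a₅ : F3 := Finsupp.single 2 1

/-- `(1−t₂)(a₅ − a₂) = 0` -/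
noncomputable def r₁ : F3 := (1 - T₂) • (a₅ - a₂)
/-- `(1−t₁+t₁t₂)a₂ − (1−t₁)²a₃ − t₂a₅ = 0` -/
noncomputable def r₂ : F3 := (1 - T₁ + T₁ * T₂) • a₂ - ((1 - T₁) ^ 2) • a₃ - T₂ • a₅
/-- `−a₂ + (1−t₁)²a₃ + (t₁+t₂−t₁t₂)a₅ = 0` -/
noncomputable def r₃ : F3 := -a₂ + ((1 - T₁) ^ 2) • a₃ + (T₁ + T₂ - T₁ * T₂) • a₅

/-- The module presented by generators `a₂, a₃, a₅` and relations `r₁, r₂, r₃`. -/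
noncomputable abbrev Mmod : Type := F3 ⧸ Submodule.span Lambda2 {r₁, r₂, r₃}

/-- Free module on generators `u, v` (indices 0, 1). -/
noncomputable abbrev F2 : Type := Fin 2 →₀ Lambda2

noncomputable def u : F2 := Finsupp.single 0 1
noncomputable def v : F2 := Finsupp.single 1 1

/-- `(1−t₂)·((1−t₁)(1−t₂)u − (1−t₁)²v) = 0` -/
noncomputable def r : F2 := (1 - T₂) • (((1 - T₁) * (1 - T₂)) • u - ((1 - T₁) ^ 2) • v)

/-- The module presented by generators `u, v` and the single relation `r`. -/
noncomputable abbrev M'mod : Type := F2 ⧸ Submodule.span Lambda2 {r}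

/-! ### Auxiliary constructions -/

/-- The inverse of `T₂`. -/
noncomputable def Wbar : Lambda2 := AddMonoidAlgebra.single (Finsupp.single 1 (-1)) 1

lemma hW : T₂ * Wbar = 1 := by
  simp [T₂, Wbar, AddMonoidAlgebra.single_mul_single, AddMonoidAlgebra.one_def]

/-- The map `F3 → F2`: `a₂ ↦ u`, `a₃ ↦ v`,
`a₅ ↦ t₂⁻¹((1−t₁+t₁t₂)u − (1−t₁)²v)`. -/
noncomputable def φ : F3 →ₗ[Lambda2] F2 :=
  Finsupp.lsum ℕ fun i => LinearMap.toSpanSingleton Lambda2 _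
    (![u, v, Wbar • ((1 - T₁ + T₁ * T₂) • u - ((1 - T₁) ^ 2) • v)] i)

/-- The map `F2 → F3`: `u ↦ a₂`, `v ↦ a₃`. -/
noncomputable def ψ : F2 →ₗ[Lambda2] F3 :=
  Finsupp.lsum ℕ fun i => LinearMap.toSpanSingleton Lambda2 _ (![a₂, a₃] i)

lemma φ_a₂ : φ a₂ = u := by simp [φ, a₂]
lemma φ_a₃ : φ a₃ = v := by simp [φ, a₃]
lemma φ_a₅ : φ a₅ = Wbar • ((1 - T₁ + T₁ * T₂) • u - ((1 - T₁) ^ 2) • v) := by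
  simp [φ, a₅]
lemma ψ_u : ψ u = a₂ := by simp [ψ, u]
lemma ψ_v : ψ v = a₃ := by simp [ψ, v]

lemma φ_r₁ : φ r₁ = Wbar • r := by
  rw [r₁, map_smul, map_sub, φ_a₅, φ_a₂, r]
  match_scalars
  · linear_combination ((1:Lambda2) - T₂) * hW
  · ring

lemma φ_r₂ : φ r₂ = 0 := by
  rw [r₂, map_sub, map_sub, map_smul, map_smul, map_smul, φ_a₂, φ_a₃, φ_a₅]
  match_scalars
  · linear_combination (-((1:Lambda2) - T₁ + T₁ * T₂)) * hW
  · linear_combination (((1:Lambda2) - T₁) ^ 2) * hW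

lemma φ_r₃ : φ r₃ = (T₁ * Wbar) • r := by
  rw [r₃, map_add, map_add, map_neg, map_smul, map_smul, φ_a₂, φ_a₃, φ_a₅, r]
  match_scalars
  · linear_combination hW
  · linear_combination (-((1:Lambda2) - T₁) ^ 2) * hW

lemma ψ_r : ψ r = T₂ • r₁ + (1 - T₂) • r₂ := by
  rw [r, map_smul, map_sub, map_smul, map_smul, ψ_u, ψ_v, r₁, r₂]
  module

lemma ψφ_a₅ : ψ (φ a₅) - a₅ = Wbar • r₂ := by
  rw [φ_a₅, map_smul, map_sub, map_smul, map_smul, ψ_u, ψ_v, r₂]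
  match_scalars
  · ring
  · ring
  · linear_combination hW

noncomputable def P : Submodule Lambda2 F3 := Submodule.span Lambda2 {r₁, r₂, r₃}
noncomputable def Q : Submodule Lambda2 F2 := Submodule.span Lambda2 {r}

lemma hr_mem : r ∈ Q := Submodule.subset_span rfl
lemma hr₁_mem : r₁ ∈ P := Submodule.subset_span (by simp)
lemma hr₂_mem : r₂ ∈ P := Submodule.subset_span (by simp)

lemma hφ : P ≤ LinearMap.ker (Q.mkQ ∘ₗ φ) := by
  rw [P, Submodule.span_le]
  rintro x (rfl | rfl | rfl) <;>
    simp only [SetLike.mem_coe, LinearMap.mem_ker, LinearMap.comp_apply,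
      Submodule.mkQ_apply, Submodule.Quotient.mk_eq_zero]
  · rw [φ_r₁]; exact Q.smul_mem _ hr_mem
  · rw [φ_r₂]; exact Q.zero_mem
  · rw [φ_r₃]; exact Q.smul_mem _ hr_mem

lemma hψ : Q ≤ LinearMap.ker (P.mkQ ∘ₗ ψ) := by
  rw [Q, Submodule.span_le]
  rintro x rfl
  simp only [SetLike.mem_coe, LinearMap.mem_ker, LinearMap.comp_apply,
    Submodule.mkQ_apply, Submodule.Quotient.mk_eq_zero]
  rw [ψ_r]
  exact P.add_mem (P.smul_mem _ hr₁_mem) (P.smul_mem _ hr₂_mem)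

noncomputable def Φ : Mmod →ₗ[Lambda2] M'mod := Submodule.liftQ P (Q.mkQ ∘ₗ φ) hφ
noncomputable def Ψ : M'mod →ₗ[Lambda2] Mmod := Submodule.liftQ Q (P.mkQ ∘ₗ ψ) hψ

lemma Φ_mk (x : F3) : Φ (Submodule.Quotient.mk x) = Submodule.Quotient.mk (φ x) := rfl

lemma Ψ_mk (x : F2) : Ψ (Submodule.Quotient.mk x) = Submodule.Quotient.mk (ψ x) := rfl

lemma ΦΨ : Φ ∘ₗ Ψ = LinearMap.id := by
  apply Submodule.linearMap_qext
  apply Finsupp.lhom_ext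
  intro i c
  have h : (Finsupp.single i c : F2) = c • Finsupp.single i 1 := by
    rw [Finsupp.smul_single, smul_eq_mul, mul_one]
  rw [h]
  simp only [LinearMap.comp_apply, map_smul, Submodule.mkQ_apply, LinearMap.id_apply]
  congr 1
  fin_cases i
  · show Φ (Ψ (Submodule.Quotient.mk u)) = Submodule.Quotient.mk u
    rw [Ψ_mk, ψ_u, Φ_mk, φ_a₂]
  · show Φ (Ψ (Submodule.Quotient.mk v)) = Submodule.Quotient.mk v
    rw [Ψ_mk, ψ_v, Φ_mk, φ_a₃]

lemma ΨΦ : Ψ ∘ₗ Φ = LinearMap.id := by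
  apply Submodule.linearMap_qext
  apply Finsupp.lhom_ext
  intro i c
  have h : (Finsupp.single i c : F3) = c • Finsupp.single i 1 := by
    rw [Finsupp.smul_single, smul_eq_mul, mul_one]
  rw [h]
  simp only [LinearMap.comp_apply, map_smul, Submodule.mkQ_apply, LinearMap.id_apply]
  congr 1
  fin_cases i
  · show Ψ (Φ (Submodule.Quotient.mk a₂)) = Submodule.Quotient.mk a₂
    rw [Φ_mk, φ_a₂, Ψ_mk, ψ_u]
  · show Ψ (Φ (Submodule.Quotient.mk a₃)) = Submodule.Quotient.mk a₃
    rw [Φ_mk, φ_a₃, Ψ_mk, ψ_v]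
  · show Ψ (Φ (Submodule.Quotient.mk a₅)) = Submodule.Quotient.mk a₅
    rw [Φ_mk, Ψ_mk, Submodule.Quotient.eq]
    have : ψ (φ a₅) - a₅ ∈ P := ψφ_a₅ ▸ P.smul_mem _ hr₂_mem
    exact this

theorem stmt_12 :
    ∃ e : Mmod ≃ₗ[Lambda2] M'mod,
      e (Submodule.Quotient.mk a₂) = Submodule.Quotient.mk u ∧
      e (Submodule.Quotient.mk a₃) = Submodule.Quotient.mk v := by
  refine ⟨LinearEquiv.ofLinear Φ Ψ ΦΨ ΨΦ, ?_, ?_⟩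
  · show Φ (Submodule.Quotient.mk a₂) = _
    rw [Φ_mk, φ_a₂]
  · show Φ (Submodule.Quotient.mk a₃) = _
    rw [Φ_mk, φ_a₃]
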